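/- arXiv:2109.11537 — 2 statements merged into one kernel-verified Lean document; each statement's English description precedes it below -/
import Mathlib

section
/- Let 1 < p < ∞ and t, y ∈ ℝ, and let l = p·|t|^{p−2}·t (the derivative of |t|^p). Then |t|^p + l·y + ((p−1)/(p·2^p))·γ_p(|t|, y) ≤ |t + y|^p ≤ |t|^p + l·y + 2^p·γ_p(|t|, y). -/
/-- The smoothed `p`-norm function `γ_p(t,y)`. -/
noncomputable def gammaFn (p t y : ℝ) : ℝ :=
  if |y| ≤ t then (p / 2) * t ^ (p - 2) * y ^ 2
  else |y| ^ p + (p / 2 - 1) * t ^ p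

/-!
With `c = (p - 1) / (p * 2 ^ p)`, homogeneity (substitute `y = t z`) reduces the claim to
`c γ_p(1, z) ≤ |1 + z| ^ p - 1 - p z ≤ 2 ^ p γ_p(1, z)`. Both sides vanish at `z = 0`, and on each
of the regions `|z| ≤ 1`, `z ≥ 1`, `z ≤ -1` the two inequalities follow by comparing derivatives.
Near `0` this amounts to bounding the secant slope of `u ↦ u ^ (p - 1)` through `1` on `[0, 2]`,
which by convexity or concavity lies between `1` and `2 ^ (p - 1) - 1`; for `|z| ≥ 1` one compares
`(x ± 1) ^ (p - 1)` with `x ^ (p - 1)`. The outer regions start from the values at `±1` supplied by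
the inner one, where the two branches of `γ_p` agree.
-/

open Real Set

-- The factor `x - a` lets one hypothesis cover both orientations of `a` and `b`.
theorem sub_le_sub_of_mul_sub_deriv_le {f g f' g' : ℝ → ℝ} {a b : ℝ}
    (hf : ∀ x ∈ uIcc a b, HasDerivAt f (f' x) x) (hg : ∀ x ∈ uIcc a b, HasDerivAt g (g' x) x)
    (h : ∀ x ∈ uIcc a b, (x - a) * f' x ≤ (x - a) * g' x) : f b - f a ≤ g b - g a := by
  have hd : ∀ x ∈ uIcc a b, HasDerivAt (g - f) (g' x - f' x) x := fun x hx =>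
    (hg x hx).sub (hf x hx)
  have hc : ContinuousOn (g - f) (uIcc a b) := fun x hx =>
    (hd x hx).continuousAt.continuousWithinAt
  rcases le_total a b with hab | hba
  · rw [uIcc_of_le hab] at hd hc h
    have hmono : MonotoneOn (g - f) (Icc a b) := by
      refine monotoneOn_of_hasDerivWithinAt_nonneg (convex_Icc a b) hc
        (fun x hx => (hd x (interior_subset hx)).hasDerivWithinAt) fun x hx => ?_
      rw [interior_Icc] at hx
      exact sub_nonneg.2 (le_of_mul_le_mul_left (h x (Ioo_subset_Icc_self hx)) (sub_pos.2 hx.1))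
    have := hmono (left_mem_Icc.2 hab) (right_mem_Icc.2 hab) hab
    simp only [Pi.sub_apply] at this
    linarith
  · rw [uIcc_of_ge hba] at hd hc h
    have hanti : AntitoneOn (g - f) (Icc b a) := by
      refine antitoneOn_of_hasDerivWithinAt_nonpos (convex_Icc b a) hc
        (fun x hx => (hd x (interior_subset hx)).hasDerivWithinAt) fun x hx => ?_
      rw [interior_Icc] at hx
      exact sub_nonpos.2
        ((mul_le_mul_left_of_neg (sub_neg.2 hx.2)).1 (h x (Ioo_subset_Icc_self hx)))
    have := hanti (left_mem_Icc.2 hba) (right_mem_Icc.2 hba) hba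
    simp only [Pi.sub_apply] at this
    linarith

theorem sandwich_of_hasDerivAt {R G R' G' : ℝ → ℝ} {lo hi a b : ℝ}
    (hR : ∀ x ∈ uIcc a b, HasDerivAt R (R' x) x) (hG : ∀ x ∈ uIcc a b, HasDerivAt G (G' x) x)
    (hderiv : ∀ x ∈ uIcc a b, lo * ((x - a) * G' x) ≤ (x - a) * R' x ∧
      (x - a) * R' x ≤ hi * ((x - a) * G' x))
    (ha : lo * G a ≤ R a ∧ R a ≤ hi * G a) : lo * G b ≤ R b ∧ R b ≤ hi * G b := by
  have hlo := sub_le_sub_of_mul_sub_deriv_le (fun x hx => (hG x hx).const_mul lo) hR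
    fun x hx => by linarith [mul_left_comm (x - a) lo (G' x), (hderiv x hx).1]
  have hhi := sub_le_sub_of_mul_sub_deriv_le hR (fun x hx => (hG x hx).const_mul hi)
    fun x hx => by linarith [mul_left_comm (x - a) hi (G' x), (hderiv x hx).2]
  constructor <;> linarith [ha.1, ha.2]

theorem one_add_half_mul_le_two_rpow {q : ℝ} (hq : 0 ≤ q) : 1 + q / 2 ≤ (2 : ℝ) ^ q := by
  have hlog : 1 / 2 < log 2 := by have := log_two_gt_d9; norm_num at this ⊢; linarith
  calc 1 + q / 2 ≤ q * log 2 + 1 := by nlinarith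
    _ ≤ exp (q * log 2) := add_one_le_exp _
    _ = 2 ^ q := by rw [rpow_def_of_pos two_pos, mul_comm]

theorem rpow_secant_slope_mem {q u : ℝ} (hq : 0 < q) (hu0 : 0 ≤ u) (hu2 : u ≤ 2) (hu1 : u ≠ 1) :
    min 1 (2 ^ q - 1) ≤ (u ^ q - 1) / (u - 1) ∧ (u ^ q - 1) / (u - 1) ≤ max 1 (2 ^ q - 1) := by
  have hmem0 : (0 : ℝ) ∈ Ici 0 := self_mem_Ici
  have hmem1 : (1 : ℝ) ∈ Ici 0 := mem_Ici.2 zero_le_one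
  have hmem2 : (2 : ℝ) ∈ Ici 0 := mem_Ici.2 zero_le_two
  have hslope0 : ((0 : ℝ) ^ q - 1) / (0 - 1) = 1 := by rw [zero_rpow hq.ne']; norm_num
  have hslope2 : ((2 : ℝ) ^ q - 1) / (2 - 1) = 2 ^ q - 1 := by norm_num
  rcases le_total 1 q with hq1 | hq1
  · have hf := convexOn_rpow hq1
    have hl := hf.secant_mono hmem1 hmem0 hu0 zero_ne_one hu1 hu0
    have hr := hf.secant_mono hmem1 hu0 hmem2 hu1 (by norm_num) hu2
    simp only [one_rpow, hslope0, hslope2] at hl hr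
    exact ⟨min_le_left _ _ |>.trans hl, hr.trans (le_max_right _ _)⟩
  · have hf := (concaveOn_rpow hq.le hq1).neg
    have hl := hf.secant_mono hmem1 hmem0 hu0 zero_ne_one hu1 hu0
    have hr := hf.secant_mono hmem1 hu0 hmem2 hu1 (by norm_num) hu2
    have hneg (x : ℝ) : (-x ^ q - -1) / (x - 1) = -((x ^ q - 1) / (x - 1)) := by ring
    simp only [Pi.neg_apply, one_rpow, hneg, neg_le_neg_iff, hslope0, hslope2] at hl hr
    exact ⟨min_le_right _ _ |>.trans hr, hl.trans (le_max_left _ _)⟩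

section

variable {p : ℝ}

theorem lower_const_mul_two_rpow_le (hp : 1 < p) :
    (p - 1) / (p * 2 ^ p) * 2 ^ (p - 1) ≤ min 1 (2 ^ (p - 1) - 1) := by
  have heq : (p - 1) / (p * 2 ^ p) * 2 ^ (p - 1) = (p - 1) / (2 * p) := by
    rw [rpow_sub two_pos, rpow_one]
    field_simp
  have hhalf := one_add_half_mul_le_two_rpow (by linarith : 0 ≤ p - 1)
  rw [heq, le_min_iff, div_le_iff₀ (by positivity)]
  refine ⟨by linarith, ?_⟩
  calc (p - 1) / (2 * p) ≤ (p - 1) / 2 := by gcongr; linarith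
    _ ≤ 2 ^ (p - 1) - 1 := by linarith

theorem lower_const_le (hp : 1 < p) : (p - 1) / (p * 2 ^ p) ≤ min 1 (2 ^ (p - 1) - 1) := by
  refine le_trans ?_ (lower_const_mul_two_rpow_le hp)
  refine le_mul_of_one_le_right (div_nonneg (by linarith) (by positivity)) ?_
  exact one_le_rpow (by norm_num) (by linarith)

theorem max_one_two_rpow_sub_one_le (hp : 1 < p) : max 1 (2 ^ (p - 1) - 1) ≤ (2 : ℝ) ^ p := by
  have h : (2 : ℝ) ^ (p - 1) ≤ 2 ^ p := rpow_le_rpow_of_exponent_le (by norm_num) (by linarith)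
  exact max_le (one_le_rpow (by norm_num) (by linarith)) (by linarith)

theorem sub_one_mul_rpow_sub_one_sandwich (hp : 1 < p) {u : ℝ} (hu0 : 0 ≤ u) (hu2 : u ≤ 2) :
    (p - 1) / (p * 2 ^ p) * (u - 1) ^ 2 ≤ (u - 1) * (u ^ (p - 1) - 1) ∧
      (u - 1) * (u ^ (p - 1) - 1) ≤ 2 ^ p * (u - 1) ^ 2 := by
  rcases eq_or_ne u 1 with rfl | hu1
  · simp
  have hslope := rpow_secant_slope_mem (by linarith : 0 < p - 1) hu0 hu2 hu1
  have hsq : 0 ≤ (u - 1) ^ 2 := sq_nonneg _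
  have heq : (u - 1) * (u ^ (p - 1) - 1) = (u ^ (p - 1) - 1) / (u - 1) * (u - 1) ^ 2 := by
    field_simp [sub_ne_zero.2 hu1]
  rw [heq]
  exact ⟨mul_le_mul_of_nonneg_right ((lower_const_le hp).trans hslope.1) hsq,
    mul_le_mul_of_nonneg_right (hslope.2.trans (max_one_two_rpow_sub_one_le hp)) hsq⟩

theorem one_add_rpow_sub_one_sandwich (hp : 1 < p) {x : ℝ} (hx : 1 ≤ x) :
    (p - 1) / (p * 2 ^ p) * x ^ (p - 1) ≤ (1 + x) ^ (p - 1) - 1 ∧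
      (1 + x) ^ (p - 1) - 1 ≤ 2 ^ p * x ^ (p - 1) := by
  have hc0 : 0 ≤ (p - 1) / (p * 2 ^ p) := div_nonneg (by linarith) (by positivity)
  have hc := le_min_iff.1 (lower_const_le hp)
  have hc2 := le_min_iff.1 (lower_const_mul_two_rpow_le hp)
  have hx_le : x ^ (p - 1) ≤ (1 + x) ^ (p - 1) :=
    rpow_le_rpow (by linarith) (by linarith) (by linarith)
  have h2_le : (2 : ℝ) ^ (p - 1) ≤ (1 + x) ^ (p - 1) :=
    rpow_le_rpow (by norm_num) (by linarith) (by linarith)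
  have h2x : (1 + x) ^ (p - 1) ≤ 2 ^ (p - 1) * x ^ (p - 1) := by
    rw [← mul_rpow (by norm_num) (by linarith)]
    exact rpow_le_rpow (by linarith) (by linarith) (by linarith)
  have h2p : (2 : ℝ) ^ (p - 1) ≤ 2 ^ p := rpow_le_rpow_of_exponent_le (by norm_num) (by linarith)
  have hxq : 0 ≤ x ^ (p - 1) := rpow_nonneg (by linarith) _
  constructor
  · -- `(1 + x) ^ (p - 1) ≥ c x ^ (p - 1) + (1 - c) 2 ^ (p - 1)` and `(1 - c) 2 ^ (p - 1) ≥ 1`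
    linarith [mul_le_mul_of_nonneg_left hx_le hc0,
      mul_le_mul_of_nonneg_left h2_le (sub_nonneg.2 hc.1)]
  · linarith [mul_le_mul_of_nonneg_right h2p hxq]

theorem sub_one_rpow_add_one_sandwich (hp : 1 < p) {u : ℝ} (hu : 1 ≤ u) :
    (p - 1) / (p * 2 ^ p) * u ^ (p - 1) ≤ (u - 1) ^ (p - 1) + 1 ∧
      (u - 1) ^ (p - 1) + 1 ≤ 2 ^ p * u ^ (p - 1) := by
  have hc0 : 0 ≤ (p - 1) / (p * 2 ^ p) := div_nonneg (by linarith) (by positivity)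
  have hc2 := le_min_iff.1 (lower_const_mul_two_rpow_le hp)
  have hsub_le : (u - 1) ^ (p - 1) ≤ u ^ (p - 1) :=
    rpow_le_rpow (by linarith) (by linarith) (by linarith)
  have hsub0 : 0 ≤ (u - 1) ^ (p - 1) := rpow_nonneg (by linarith) _
  have hone : 1 ≤ u ^ (p - 1) := one_le_rpow hu (by linarith)
  have h2p : (2 : ℝ) ≤ 2 ^ p := by
    simpa using rpow_le_rpow_of_exponent_le (by norm_num : (1 : ℝ) ≤ 2) hp.le
  refine ⟨?_, by nlinarith⟩
  rcases le_total u 2 with hu2 | hu2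
  · have : u ^ (p - 1) ≤ 2 ^ (p - 1) := rpow_le_rpow (by linarith) hu2 (by linarith)
    linarith [mul_le_mul_of_nonneg_left this hc0]
  · have : u ^ (p - 1) ≤ 2 ^ (p - 1) * (u - 1) ^ (p - 1) := by
      rw [← mul_rpow (by norm_num) (by linarith)]
      exact rpow_le_rpow (by linarith) (by linarith) (by linarith)
    linarith [mul_le_mul_of_nonneg_left this hc0, mul_le_mul_of_nonneg_right hc2.1 hsub0]

theorem hasDerivAt_one_add_rpow_sub_linear (hp : 1 ≤ p) (x : ℝ) :
    HasDerivAt (fun y => (1 + y) ^ p - 1 - p * y) (p * ((1 + x) ^ (p - 1) - 1)) x := by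
  have h : HasDerivAt (fun y : ℝ => (1 + y) ^ p) (p * (1 + x) ^ (p - 1)) x := by
    simpa using ((hasDerivAt_id x).const_add 1).rpow_const (p := p) (Or.inr hp)
  exact ((h.sub_const 1).sub ((hasDerivAt_id' x).const_mul p)).congr_deriv (by ring)

theorem hasDerivAt_rpow_add_const (hp : 1 ≤ p) (c x : ℝ) :
    HasDerivAt (fun y => y ^ p + c) (p * x ^ (p - 1)) x :=
  (hasDerivAt_rpow_const (Or.inr hp)).add_const c

theorem one_add_rpow_sandwich_of_mem_Icc (hp : 1 < p) {y : ℝ} (hy : y ∈ Icc (-1) 1) :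
    (p - 1) / (p * 2 ^ p) * (p / 2 * y ^ 2) ≤ (1 + y) ^ p - 1 - p * y ∧
      (1 + y) ^ p - 1 - p * y ≤ 2 ^ p * (p / 2 * y ^ 2) := by
  have hG (x : ℝ) : HasDerivAt (fun y : ℝ => p / 2 * y ^ 2) (p * x) x :=
    ((hasDerivAt_pow 2 x).const_mul (p / 2)).congr_deriv (by ring)
  have hderiv : ∀ x ∈ uIcc 0 y,
      (p - 1) / (p * 2 ^ p) * ((x - 0) * (p * x)) ≤ (x - 0) * (p * ((1 + x) ^ (p - 1) - 1)) ∧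
        (x - 0) * (p * ((1 + x) ^ (p - 1) - 1)) ≤ 2 ^ p * ((x - 0) * (p * x)) := by
    intro x hx
    have hx' : x ∈ Icc (-1) 1 := uIcc_subset_Icc (by norm_num) hy hx
    obtain ⟨lo, hi⟩ := sub_one_mul_rpow_sub_one_sandwich hp (u := 1 + x)
      (by linarith [hx'.1]) (by linarith [hx'.2])
    simp only [add_sub_cancel_left] at lo hi
    have hp0 : 0 ≤ p := by linarith
    constructor
    · linarith [mul_le_mul_of_nonneg_left lo hp0]
    · linarith [mul_le_mul_of_nonneg_left hi hp0]
  simpa using sandwich_of_hasDerivAt (fun x _ => hasDerivAt_one_add_rpow_sub_linear hp.le x)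
    (fun x _ => hG x) hderiv (by simp)

theorem one_add_rpow_sandwich_of_one_le (hp : 1 < p) {y : ℝ} (hy : 1 ≤ y) :
    (p - 1) / (p * 2 ^ p) * (y ^ p + (p / 2 - 1)) ≤ (1 + y) ^ p - 1 - p * y ∧
      (1 + y) ^ p - 1 - p * y ≤ 2 ^ p * (y ^ p + (p / 2 - 1)) := by
  have hderiv : ∀ x ∈ uIcc 1 y,
      (p - 1) / (p * 2 ^ p) * ((x - 1) * (p * x ^ (p - 1))) ≤
          (x - 1) * (p * ((1 + x) ^ (p - 1) - 1)) ∧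
        (x - 1) * (p * ((1 + x) ^ (p - 1) - 1)) ≤ 2 ^ p * ((x - 1) * (p * x ^ (p - 1))) := by
    intro x hx
    rw [uIcc_of_le hy] at hx
    obtain ⟨lo, hi⟩ := one_add_rpow_sub_one_sandwich hp hx.1
    have hw : 0 ≤ (x - 1) * p := mul_nonneg (by linarith [hx.1]) (by linarith)
    constructor
    · linarith [mul_le_mul_of_nonneg_left lo hw]
    · linarith [mul_le_mul_of_nonneg_left hi hw]
  have hbase : (p - 1) / (p * 2 ^ p) * ((1 : ℝ) ^ p + (p / 2 - 1)) ≤ (1 + 1) ^ p - 1 - p * 1 ∧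
      (1 + 1) ^ p - 1 - p * 1 ≤ 2 ^ p * ((1 : ℝ) ^ p + (p / 2 - 1)) := by
    have h := one_add_rpow_sandwich_of_mem_Icc hp (y := 1) (by norm_num)
    simp only [one_rpow, one_pow, mul_one] at h ⊢
    constructor <;> linarith [h.1, h.2]
  exact sandwich_of_hasDerivAt (fun x _ => hasDerivAt_one_add_rpow_sub_linear hp.le x)
    (fun x _ => hasDerivAt_rpow_add_const hp.le _ x) hderiv hbase

theorem sub_one_rpow_sandwich_of_one_le (hp : 1 < p) {u : ℝ} (hu : 1 ≤ u) :
    (p - 1) / (p * 2 ^ p) * (u ^ p + (p / 2 - 1)) ≤ (u - 1) ^ p - 1 + p * u ∧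
      (u - 1) ^ p - 1 + p * u ≤ 2 ^ p * (u ^ p + (p / 2 - 1)) := by
  have hR (x : ℝ) :
      HasDerivAt (fun u => (u - 1) ^ p - 1 + p * u) (p * ((x - 1) ^ (p - 1) + 1)) x := by
    have h : HasDerivAt (fun u : ℝ => (u - 1) ^ p) (p * (x - 1) ^ (p - 1)) x := by
      simpa using ((hasDerivAt_id x).sub_const 1).rpow_const (p := p) (Or.inr hp.le)
    exact ((h.sub_const 1).add ((hasDerivAt_id' x).const_mul p)).congr_deriv (by ring)
  have hderiv : ∀ x ∈ uIcc 1 u,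
      (p - 1) / (p * 2 ^ p) * ((x - 1) * (p * x ^ (p - 1))) ≤
          (x - 1) * (p * ((x - 1) ^ (p - 1) + 1)) ∧
        (x - 1) * (p * ((x - 1) ^ (p - 1) + 1)) ≤ 2 ^ p * ((x - 1) * (p * x ^ (p - 1))) := by
    intro x hx
    rw [uIcc_of_le hu] at hx
    obtain ⟨lo, hi⟩ := sub_one_rpow_add_one_sandwich hp hx.1
    have hw : 0 ≤ (x - 1) * p := mul_nonneg (by linarith [hx.1]) (by linarith)
    constructor
    · linarith [mul_le_mul_of_nonneg_left lo hw]
    · linarith [mul_le_mul_of_nonneg_left hi hw]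
  have hbase : (p - 1) / (p * 2 ^ p) * ((1 : ℝ) ^ p + (p / 2 - 1)) ≤ (1 - 1) ^ p - 1 + p * 1 ∧
      (1 - 1) ^ p - 1 + p * 1 ≤ 2 ^ p * ((1 : ℝ) ^ p + (p / 2 - 1)) := by
    have h := one_add_rpow_sandwich_of_mem_Icc hp (y := -1) (by norm_num)
    simp only [one_rpow, add_neg_cancel, sub_self, neg_one_sq, mul_one, mul_neg] at h ⊢
    constructor <;> linarith [h.1, h.2]
  exact sandwich_of_hasDerivAt (fun x _ => hR x)
    (fun x _ => hasDerivAt_rpow_add_const hp.le _ x) hderiv hbase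

theorem abs_one_add_rpow_sandwich (hp : 1 < p) (z : ℝ) :
    (p - 1) / (p * 2 ^ p) * gammaFn p 1 z ≤ |1 + z| ^ p - 1 - p * z ∧
      |1 + z| ^ p - 1 - p * z ≤ 2 ^ p * gammaFn p 1 z := by
  unfold gammaFn
  simp only [one_rpow, mul_one]
  split_ifs with h
  · rw [abs_of_nonneg (by linarith [(abs_le.1 h).1] : 0 ≤ 1 + z)]
    exact one_add_rpow_sandwich_of_mem_Icc hp (abs_le.1 h)
  · rcases le_or_gt 0 z with hz | hz
    · rw [abs_of_nonneg hz] at h ⊢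
      rw [abs_of_nonneg (by linarith)]
      exact one_add_rpow_sandwich_of_one_le hp (by linarith)
    · rw [abs_of_neg hz] at h ⊢
      rw [abs_of_nonpos (by linarith), show -(1 + z) = -z - 1 by ring]
      have h' := sub_one_rpow_sandwich_of_one_le hp (u := -z) (by linarith)
      constructor <;> linarith [h'.1, h'.2]

theorem gammaFn_abs_right (p t y : ℝ) : gammaFn p t |y| = gammaFn p t y := by
  simp only [gammaFn, abs_abs, sq_abs]

theorem gammaFn_mul_right {s : ℝ} (hs : 0 < s) (p z : ℝ) :
    gammaFn p s (s * z) = s ^ p * gammaFn p 1 z := by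
  have hle : |s * z| ≤ s ↔ |z| ≤ 1 := by
    rw [abs_mul, abs_of_pos hs]
    exact mul_le_iff_le_one_right hs
  unfold gammaFn
  simp only [hle, one_rpow, mul_one]
  split_ifs
  · rw [rpow_sub hs, rpow_two]
    field_simp
  · rw [abs_mul, abs_of_pos hs, mul_rpow hs.le (abs_nonneg z)]
    ring

theorem gammaFn_abs_div {t : ℝ} (ht : t ≠ 0) (p y : ℝ) :
    gammaFn p |t| y = |t| ^ p * gammaFn p 1 (y / t) := by
  rw [← gammaFn_abs_right p |t| y, ← gammaFn_abs_right p 1 (y / t), abs_div,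
    ← gammaFn_mul_right (abs_pos.2 ht), mul_div_cancel₀ _ (abs_ne_zero.2 ht)]

theorem gammaFn_zero_left (hp : 0 < p) (y : ℝ) : gammaFn p 0 y = |y| ^ p := by
  unfold gammaFn
  split_ifs with h
  · simp [abs_nonpos_iff.1 h, zero_rpow hp.ne']
  · simp [zero_rpow hp.ne']

theorem mul_abs_rpow_sub_two_mul {t : ℝ} (ht : t ≠ 0) (p y : ℝ) :
    p * |t| ^ (p - 2) * t * y = |t| ^ p * (p * (y / t)) := by
  have hsq : |t| ^ (p - 2) * t ^ 2 = |t| ^ p := by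
    rw [← sq_abs, rpow_sub (abs_pos.2 ht), rpow_two]
    field_simp
  rw [← hsq]
  field_simp

theorem abs_add_rpow_eq_mul {t : ℝ} (ht : t ≠ 0) (p y : ℝ) :
    |t + y| ^ p = |t| ^ p * |1 + y / t| ^ p := by
  rw [← mul_rpow (abs_nonneg _) (abs_nonneg _), ← abs_mul, mul_add, mul_one,
    mul_div_cancel₀ _ ht]

end

/-- for `1 < p` and any `t, y ∈ ℝ`, with `l = p|t|^{p−2}t`:
`|t|^p + ly + ((p−1)/(p2^p))γ_p(|t|,y) ≤ |t+y|^p ≤ |t|^p + ly + 2^p γ_p(|t|,y)`. -/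
theorem stmt15 (p t y : ℝ) (hp : 1 < p) :
    |t| ^ p + (p * |t| ^ (p - 2) * t) * y
        + ((p - 1) / (p * 2 ^ p)) * gammaFn p |t| y ≤ |t + y| ^ p ∧
      |t + y| ^ p ≤ |t| ^ p + (p * |t| ^ (p - 2) * t) * y
        + 2 ^ p * gammaFn p |t| y := by
  have hp0 : 0 < p := by linarith
  rcases eq_or_ne t 0 with rfl | ht
  · have hc := (le_min_iff.1 (lower_const_le hp)).1
    have h2p : (1 : ℝ) ≤ 2 ^ p := one_le_rpow (by norm_num) hp0.le
    have hy : 0 ≤ |y| ^ p := rpow_nonneg (abs_nonneg y) p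
    simp only [abs_zero, zero_rpow hp0.ne', zero_add, mul_zero, zero_mul, gammaFn_zero_left hp0]
    constructor <;> nlinarith
  · have hT : 0 ≤ |t| ^ p := rpow_nonneg (abs_nonneg t) p
    obtain ⟨lo, hi⟩ := abs_one_add_rpow_sandwich hp (y / t)
    rw [gammaFn_abs_div ht, mul_abs_rpow_sub_two_mul ht, abs_add_rpow_eq_mul ht]
    constructor
    · linarith [mul_le_mul_of_nonneg_left lo hT]
    · linarith [mul_le_mul_of_nonneg_left hi hT]
end

section
/- Let 1 < p < ∞, t, y ∈ ℝ, and λ > 0. Then min{λ², λ^p}·γ_p(|t|, y) ≤ γ_p(|t|, λ·y) ≤ max{λ², λ^p}·γ_p(|t|, y). -/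
open Real

def GrowsBetween (f : ℝ → ℝ) (a b s lam : ℝ) : Prop :=
  lam ^ a * f s ≤ f (lam * s) ∧ f (lam * s) ≤ lam ^ b * f s

namespace GrowsBetween

variable {f : ℝ → ℝ} {a b s lam μ : ℝ}

theorem trans (hlam : 0 ≤ lam) (hμ : 0 ≤ μ) (h₁ : GrowsBetween f a b s lam)
    (h₂ : GrowsBetween f a b (lam * s) μ) : GrowsBetween f a b s (μ * lam) := by
  obtain ⟨lower₁, upper₁⟩ := h₁
  obtain ⟨lower₂, upper₂⟩ := h₂
  rw [GrowsBetween, mul_rpow hμ hlam, mul_rpow hμ hlam, mul_assoc, mul_assoc, mul_assoc]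
  exact ⟨(mul_le_mul_of_nonneg_left lower₁ (by positivity)).trans lower₂,
    upper₂.trans (mul_le_mul_of_nonneg_left upper₁ (by positivity))⟩

theorem of_inv (hlam : 0 < lam) (h : GrowsBetween f a b (lam * s) lam⁻¹) :
    lam ^ b * f s ≤ f (lam * s) ∧ f (lam * s) ≤ lam ^ a * f s := by
  obtain ⟨lower, upper⟩ := h
  rw [inv_mul_cancel_left₀ hlam.ne', inv_rpow hlam.le, inv_mul_le_iff₀ (by positivity)] at lower
  rw [inv_mul_cancel_left₀ hlam.ne', inv_rpow hlam.le, le_inv_mul_iff₀ (by positivity)] at upper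
  exact ⟨upper, lower⟩

end GrowsBetween

section Bernoulli

variable {p lam : ℝ}

theorem sq_rpow_half (hlam : 0 ≤ lam) : (lam ^ 2) ^ (p / 2) = lam ^ p := by
  rw [← rpow_two, ← rpow_mul hlam, mul_div_cancel₀ p two_ne_zero]

theorem one_add_mul_sq_sub_one_le_rpow (hp : 2 ≤ p) (hlam : 0 ≤ lam) :
    1 + p / 2 * (lam ^ 2 - 1) ≤ lam ^ p := by
  have h := one_add_mul_self_le_rpow_one_add (s := lam ^ 2 - 1) (by nlinarith) (p := p / 2)
    (by linarith)
  rwa [add_sub_cancel, sq_rpow_half hlam] at h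

theorem rpow_le_one_add_mul_sq_sub_one (hp₀ : 0 ≤ p) (hp : p ≤ 2) (hlam : 0 ≤ lam) :
    lam ^ p ≤ 1 + p / 2 * (lam ^ 2 - 1) := by
  have h := rpow_one_add_le_one_add_mul_self (s := lam ^ 2 - 1) (by nlinarith) (p := p / 2)
    (by linarith) (by linarith)
  rwa [add_sub_cancel, sq_rpow_half hlam] at h

end Bernoulli

section gammaFn

variable {p t s lam : ℝ}

theorem gammaFn_of_abs_le (h : |s| ≤ t) : gammaFn p t s = p / 2 * t ^ (p - 2) * s ^ 2 :=
  if_pos h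

theorem gammaFn_of_le_abs (hp : 0 < p) (ht : 0 ≤ t) (h : t ≤ |s|) :
    gammaFn p t s = |s| ^ p + (p / 2 - 1) * t ^ p := by
  rcases h.lt_or_eq with h | h
  · exact if_neg h.not_ge
  rcases ht.lt_or_eq with ht | ht
  · rw [gammaFn_of_abs_le h.ge, ← h, ← sq_abs, ← h, ← rpow_two, mul_assoc, ← rpow_add ht]
    ring_nf
  · rw [gammaFn_of_abs_le h.ge, ← h, ← ht, abs_eq_zero.mp (ht.trans h).symm]
    simp [zero_rpow hp.ne']

theorem gammaFn_growsBetween_of_abs_mul_le {a b : ℝ} (hp : 0 ≤ p) (ha : a ≤ 2) (hb : 2 ≤ b)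
    (hlam : 1 ≤ lam) (h : |lam * s| ≤ t) : GrowsBetween (gammaFn p t) a b s lam := by
  have hs : |s| ≤ t := by
    rw [abs_mul, abs_of_nonneg (zero_le_one.trans hlam)] at h
    exact (le_mul_of_one_le_left (abs_nonneg s) hlam).trans h
  have ht : 0 ≤ t := (abs_nonneg s).trans hs
  have hγ : 0 ≤ gammaFn p t s := by rw [gammaFn_of_abs_le hs]; positivity
  have hscale : gammaFn p t (lam * s) = lam ^ (2 : ℝ) * gammaFn p t s := by
    rw [gammaFn_of_abs_le h, gammaFn_of_abs_le hs, rpow_two]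
    ring
  rw [GrowsBetween, hscale]
  exact ⟨mul_le_mul_of_nonneg_right (rpow_le_rpow_of_exponent_le hlam ha) hγ,
    mul_le_mul_of_nonneg_right (rpow_le_rpow_of_exponent_le hlam hb) hγ⟩

theorem gammaFn_growsBetween_of_le_abs (hp : 0 < p) (ht : 0 ≤ t) (h : t ≤ |s|) (hlam : 1 ≤ lam) :
    GrowsBetween (gammaFn p t) (min 2 p) (max 2 p) s lam := by
  have hlam₀ : 0 ≤ lam := zero_le_one.trans hlam
  have h' : t ≤ |lam * s| := by
    rw [abs_mul, abs_of_nonneg hlam₀]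
    exact h.trans (le_mul_of_one_le_left (abs_nonneg s) hlam)
  have htp : t ^ p ≤ |s| ^ p := rpow_le_rpow ht h hp.le
  have htp₀ : 0 ≤ t ^ p := rpow_nonneg ht p
  have hlamp : 1 ≤ lam ^ p := one_le_rpow hlam hp.le
  rw [GrowsBetween, gammaFn_of_le_abs hp ht h, gammaFn_of_le_abs hp ht h', abs_mul,
    abs_of_nonneg hlam₀, mul_rpow hlam₀ (abs_nonneg s)]
  have hlam2 : 0 ≤ lam ^ 2 - 1 := by nlinarith
  rcases le_total 2 p with hp2 | hp2
  · have hbern := one_add_mul_sq_sub_one_le_rpow hp2 hlam₀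
    have hc : 0 ≤ (p / 2 - 1) * (lam ^ 2 - 1) := mul_nonneg (by linarith) hlam2
    rw [min_eq_left hp2, max_eq_right hp2, rpow_two]
    constructor
    · nlinarith [mul_le_mul_of_nonneg_left htp hc]
    · nlinarith [mul_nonneg (by linarith : 0 ≤ p / 2 - 1) htp₀]
  · have hbern := rpow_le_one_add_mul_sq_sub_one hp.le hp2 hlam₀
    have hc : 0 ≤ (1 - p / 2) * (lam ^ 2 - 1) := mul_nonneg (by linarith) hlam2
    rw [min_eq_right hp2, max_eq_left hp2, rpow_two]
    constructor
    · nlinarith [mul_nonneg (by linarith : 0 ≤ 1 - p / 2) htp₀]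
    · nlinarith [mul_le_mul_of_nonneg_left htp hc]

theorem gammaFn_growsBetween (hp : 0 < p) (ht : 0 ≤ t) (hlam : 1 ≤ lam) :
    GrowsBetween (gammaFn p t) (min 2 p) (max 2 p) s lam := by
  rcases le_or_gt |lam * s| t with hA | hA
  · exact gammaFn_growsBetween_of_abs_mul_le hp.le (min_le_left _ _) (le_max_left _ _) hlam hA
  rcases le_total t |s| with hD | hD
  · exact gammaFn_growsBetween_of_le_abs hp ht hD hlam
  have hs : 0 < |s| := by
    by_contra! hs
    rw [abs_mul, abs_nonpos_iff.mp hs, abs_zero, mul_zero] at hA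
    exact hA.not_ge ht
  have ht₀ : 0 < t := hs.trans_le hD
  have hlam₀ : 0 ≤ lam := zero_le_one.trans hlam
  set μ := t / |s| with hμ
  have hμ₀ : 0 < μ := by positivity
  have hμs : |μ * s| = t := by
    rw [abs_mul, abs_of_pos hμ₀, hμ, div_mul_cancel₀ _ hs.ne']
  have hν : 1 ≤ lam / μ := by
    rw [abs_mul, abs_of_nonneg hlam₀] at hA
    rw [hμ, div_div_eq_mul_div, le_div_iff₀ ht₀]
    linarith
  have hfirst := gammaFn_growsBetween_of_abs_mul_le hp.le (min_le_left 2 p) (le_max_left 2 p)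
    ((one_le_div hs).mpr hD) hμs.le
  have hsecond := gammaFn_growsBetween_of_le_abs (s := μ * s) hp ht hμs.ge hν
  simpa only [div_mul_cancel₀ lam hμ₀.ne'] using
    hfirst.trans hμ₀.le (zero_le_one.trans hν) hsecond

end gammaFn

/-- for `1 < p`, `t, y ∈ ℝ`, `λ > 0`:
`min{λ², λ^p}γ_p(|t|, y) ≤ γ_p(|t|, λy) ≤ max{λ², λ^p}γ_p(|t|, y)`. -/
theorem stmt16 (p t y lam : ℝ) (hp : 1 < p) (hlam : 0 < lam) :
    min (lam ^ 2) (lam ^ p) * gammaFn p |t| y ≤ gammaFn p |t| (lam * y) ∧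
      gammaFn p |t| (lam * y) ≤ max (lam ^ 2) (lam ^ p) * gammaFn p |t| y := by
  have hp₀ : 0 < p := zero_lt_one.trans hp
  rcases le_total 1 lam with hlam₁ | hlam₁
  · have h := gammaFn_growsBetween (s := y) hp₀ (abs_nonneg t) hlam₁
    rwa [GrowsBetween, (monotone_rpow_of_base_ge_one hlam₁).map_min,
      (monotone_rpow_of_base_ge_one hlam₁).map_max, rpow_two] at h
  · have h := (gammaFn_growsBetween (s := lam * y) hp₀ (abs_nonneg t)
      ((one_le_inv₀ hlam).mpr hlam₁)).of_inv hlam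
    rwa [(antitone_rpow_of_base_le_one hlam hlam₁).map_max,
      (antitone_rpow_of_base_le_one hlam hlam₁).map_min, rpow_two] at h
end
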